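/- Let A be measurable, symmetric-valued and locally uniformly elliptic on Ω and V ∈ L^p_loc(Ω), p > d/2. If there exists a positive weak supersolution φ ∈ C¹(Ω) of the equation -∇·(A∇u) + Vu = 0 in Ω, then the quadratic form is nonnegative: a_{A,V}[u] = ∫_Ω (A∇u·∇u + V u²) dx ≥ 0 for every u ∈ C_c^∞(Ω). -/

import Mathlib

open MeasureTheory Filter Topology Matrix

noncomputable def grad {d : ℕ} (f : (Fin d → ℝ) → ℝ) (x : Fin d → ℝ) : Fin d → ℝ :=
  fun i => fderiv ℝ f x (Pi.single i 1)

noncomputable def aForm {d : ℕ} (Ω : Set (Fin d → ℝ))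
    (A : (Fin d → ℝ) → Matrix (Fin d) (Fin d) ℝ) (V : (Fin d → ℝ) → ℝ)
    (u : (Fin d → ℝ) → ℝ) : ℝ :=
  ∫ x in Ω, (((A x).mulVec (grad u x)) ⬝ᵥ (grad u x) + V x * (u x) ^ 2)

noncomputable def pairing {d : ℕ} (Ω : Set (Fin d → ℝ))
    (A : (Fin d → ℝ) → Matrix (Fin d) (Fin d) ℝ) (V : (Fin d → ℝ) → ℝ)
    (ψ φ : (Fin d → ℝ) → ℝ) : ℝ :=
  ∫ x in Ω, (((A x).mulVec (grad ψ x)) ⬝ᵥ (grad φ x) + V x * ψ x * φ x)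

def LocUnifElliptic {d : ℕ} (Ω : Set (Fin d → ℝ))
    (A : (Fin d → ℝ) → Matrix (Fin d) (Fin d) ℝ) : Prop :=
  ∀ K : Set (Fin d → ℝ), K ⊆ Ω → IsCompact K → ∃ μ : ℝ, 1 < μ ∧
    ∀ x ∈ K, ∀ ξ : Fin d → ℝ,
      μ⁻¹ * (∑ i, ξ i ^ 2) ≤ ((A x).mulVec ξ) ⬝ᵥ ξ ∧
      ((A x).mulVec ξ) ⬝ᵥ ξ ≤ μ * (∑ i, ξ i ^ 2)

def LocLp {d : ℕ} (Ω : Set (Fin d → ℝ)) (V : (Fin d → ℝ) → ℝ) (p : ℝ) : Prop :=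
  ∀ K : Set (Fin d → ℝ), K ⊆ Ω → IsCompact K →
    MemLp V (ENNReal.ofReal p) (volume.restrict K)

def IsTest {d : ℕ} (Ω : Set (Fin d → ℝ)) (φ : (Fin d → ℝ) → ℝ) : Prop :=
  ContDiff ℝ 1 φ ∧ HasCompactSupport φ ∧ tsupport φ ⊆ Ω

def IsSmoothTest {d : ℕ} (Ω : Set (Fin d → ℝ)) (φ : (Fin d → ℝ) → ℝ) : Prop :=
  ContDiff ℝ (⊤ : ℕ∞) φ ∧ HasCompactSupport φ ∧ tsupport φ ⊆ Ω

def WeakSol {d : ℕ} (Ω : Set (Fin d → ℝ))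
    (A : (Fin d → ℝ) → Matrix (Fin d) (Fin d) ℝ) (V : (Fin d → ℝ) → ℝ)
    (ψ : (Fin d → ℝ) → ℝ) : Prop :=
  ∀ φ, IsTest Ω φ → pairing Ω A V ψ φ = 0

def WeakSubsol {d : ℕ} (Ω : Set (Fin d → ℝ))
    (A : (Fin d → ℝ) → Matrix (Fin d) (Fin d) ℝ) (V : (Fin d → ℝ) → ℝ)
    (ψ : (Fin d → ℝ) → ℝ) : Prop :=
  ∀ φ, IsTest Ω φ → (∀ x, 0 ≤ φ x) → pairing Ω A V ψ φ ≤ 0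

def WeakSupersol {d : ℕ} (Ω : Set (Fin d → ℝ))
    (A : (Fin d → ℝ) → Matrix (Fin d) (Fin d) ℝ) (V : (Fin d → ℝ) → ℝ)
    (ψ : (Fin d → ℝ) → ℝ) : Prop :=
  ∀ φ, IsTest Ω φ → (∀ x, 0 ≤ φ x) → 0 ≤ pairing Ω A V ψ φ

lemma symm_dot {d : ℕ} (M : Matrix (Fin d) (Fin d) ℝ) (hM : M.IsSymm) (a b : Fin d → ℝ) :
    M.mulVec a ⬝ᵥ b = M.mulVec b ⬝ᵥ a := by
  calc M.mulVec a ⬝ᵥ b = b ⬝ᵥ M.mulVec a := dotProduct_comm _ _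
    _ = Matrix.vecMul b M ⬝ᵥ a := Matrix.dotProduct_mulVec _ _ _
    _ = M.mulVec b ⬝ᵥ a := by rw [← Matrix.mulVec_transpose, hM]

lemma alg_key {d : ℕ} (M : Matrix (Fin d) (Fin d) ℝ) (hM : M.IsSymm) (a b : Fin d → ℝ) (s : ℝ) :
    M.mulVec a ⬝ᵥ a
      = M.mulVec b ⬝ᵥ ((2*s) • a - (s^2) • b) + M.mulVec (a - s • b) ⬝ᵥ (a - s • b) := by
  have hsymm : M.mulVec a ⬝ᵥ b = M.mulVec b ⬝ᵥ a := symm_dot M hM a b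
  simp only [Matrix.mulVec_sub, Matrix.mulVec_smul, sub_dotProduct, dotProduct_sub,
    smul_dotProduct, dotProduct_smul, smul_eq_mul]
  linear_combination s * hsymm

lemma grad_chi {d : ℕ} {u φ : (Fin d → ℝ) → ℝ} {x : Fin d → ℝ}
    (hu : HasFDerivAt u (fderiv ℝ u x) x) (hφ : HasFDerivAt φ (fderiv ℝ φ x) x)
    (ht : φ x ≠ 0) :
    grad (fun y => u y * u y * (φ y)⁻¹) x
      = (2 * (u x * (φ x)⁻¹)) • grad u x - ((u x * (φ x)⁻¹)^2) • grad φ x := by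
  have hinv : HasFDerivAt (fun y => (φ y)⁻¹) ((-(φ x ^ 2)⁻¹) • fderiv ℝ φ x) x :=
    (hasDerivAt_inv ht).comp_hasFDerivAt x hφ
  have hprod : HasFDerivAt (fun y => u y * u y * (φ y)⁻¹)
      ((u x * u x) • ((-(φ x ^ 2)⁻¹) • fderiv ℝ φ x)
        + (φ x)⁻¹ • (u x • fderiv ℝ u x + u x • fderiv ℝ u x)) x :=
    (hu.mul hu).mul hinv
  funext i
  have hfd := hprod.fderiv
  simp only [grad, hfd, ContinuousLinearMap.add_apply, ContinuousLinearMap.smul_apply,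
    smul_eq_mul, Pi.sub_apply, Pi.smul_apply]
  field_simp
  ring


/-- Allegretto–Piepenbrink, one direction: the existence of a positive weak supersolution
of `-∇·(A∇u) + Vu = 0` in `Ω` implies the nonnegativity of the quadratic form `a_{A,V}`
on `C_c^∞(Ω)`. -/
theorem stmt_8 {d : ℕ} (hd : 0 < d) (Ω : Set (Fin d → ℝ))
    (hΩo : IsOpen Ω) (hΩc : IsConnected Ω)
    (A : (Fin d → ℝ) → Matrix (Fin d) (Fin d) ℝ) (V : (Fin d → ℝ) → ℝ) (p : ℝ)
    (hAm : ∀ i j, Measurable fun x => A x i j)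
    (hAs : ∀ x ∈ Ω, (A x).IsSymm)
    (hAe : LocUnifElliptic Ω A)
    (hp : (d : ℝ) / 2 < p) (hV : LocLp Ω V p)
    (φ : (Fin d → ℝ) → ℝ) (hφc : ContDiffOn ℝ 1 φ Ω)
    (hφpos : ∀ x ∈ Ω, 0 < φ x) (hφsup : WeakSupersol Ω A V φ) :
    ∀ u : (Fin d → ℝ) → ℝ, IsSmoothTest Ω u → 0 ≤ aForm Ω A V u := by
  intro u hu
  obtain ⟨hu1, hu2, hu3⟩ := hu
  set K := tsupport u with hKdef
  have hKc : IsCompact K := hu2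
  have hKΩ : K ⊆ Ω := hu3
  obtain ⟨μ, hμ1, hμ⟩ := hAe K hKΩ hKc
  have hμ0 : (0:ℝ) < μ := lt_trans one_pos hμ1
  -- the test function χ = u²/φ
  set χ : (Fin d → ℝ) → ℝ := fun x => u x * u x * (φ x)⁻¹ with hχdef
  set ξ : (Fin d → ℝ) → (Fin d → ℝ) :=
    fun x => grad u x - (u x * (φ x)⁻¹) • grad φ x with hξdef
  set h : (Fin d → ℝ) → ℝ := fun x => (A x).mulVec (ξ x) ⬝ᵥ ξ x with hhdef
  set f : (Fin d → ℝ) → ℝ :=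
    fun x => ((A x).mulVec (grad u x)) ⬝ᵥ (grad u x) + V x * (u x) ^ 2 with hfdef
  -- basic facts about u
  have huC : Continuous u := hu1.continuous
  have hu0 : ∀ x ∉ K, u x = 0 := fun x hx => image_eq_zero_of_notMem_tsupport hx
  have hgradu0 : ∀ x ∉ K, grad u x = 0 := by
    intro x hx
    have hev : u =ᶠ[𝓝 x] (fun _ => (0:ℝ)) :=
      eventually_of_mem (hKc.isClosed.isOpen_compl.mem_nhds hx) (fun y hy => hu0 y hy)
    funext i
    simp [grad, hev.fderiv_eq]
  have hgraduC : Continuous fun x => grad u x := by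
    apply continuous_pi
    intro i
    exact (hu1.continuous_fderiv (by simp)).clm_apply continuous_const
  have hξ0 : ∀ x ∉ K, ξ x = 0 := by
    intro x hx
    simp [hξdef, hgradu0 x hx, hu0 x hx]
  -- differentiability of φ on Ω
  have hφd : ∀ x ∈ Ω, HasFDerivAt φ (fderiv ℝ φ x) x := by
    intro x hx
    exact ((hφc.contDiffAt (hΩo.mem_nhds hx)).differentiableAt one_ne_zero).hasFDerivAt
  have hud : ∀ x, HasFDerivAt u (fderiv ℝ u x) x :=
    fun x => (hu1.differentiable (by simp) x).hasFDerivAt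
  -- gradient of χ on Ω
  have hgradχ : ∀ x ∈ Ω, grad χ x
      = (2 * (u x * (φ x)⁻¹)) • grad u x - ((u x * (φ x)⁻¹)^2) • grad φ x := by
    intro x hx
    exact grad_chi (hud x) (hφd x hx) (hφpos x hx).ne'
  -- χ is a nonnegative test function
  have hχsupp : tsupport χ ⊆ K := by
    apply closure_minimal _ hKc.isClosed
    intro x hx
    have hux : u x ≠ 0 := by
      intro h0
      apply hx
      simp [hχdef, h0]
    exact subset_closure (Function.mem_support.2 hux)
  have hχtest : IsTest Ω χ := by
    refine ⟨?_, ?_, hχsupp.trans hKΩ⟩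
    · rw [contDiff_iff_contDiffAt]
      intro x
      by_cases hx : x ∈ Ω
      · have hcu : ContDiffAt ℝ 1 u x := hu1.contDiffAt.of_le (by simp)
        have hcφ : ContDiffAt ℝ 1 φ x := hφc.contDiffAt (hΩo.mem_nhds hx)
        exact (hcu.mul hcu).mul (hcφ.inv (hφpos x hx).ne')
      · have hxK : x ∉ K := fun hxx => hx (hKΩ hxx)
        have hev : χ =ᶠ[𝓝 x] (fun _ => (0:ℝ)) := by
          apply eventually_of_mem (hKc.isClosed.isOpen_compl.mem_nhds hxK)
          intro y hy
          simp [hχdef, hu0 y hy]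
        exact contDiffAt_const.congr_of_eventuallyEq hev
    · exact IsCompact.of_isClosed_subset hKc isClosed_closure hχsupp
  have hχnn : ∀ x, 0 ≤ χ x := by
    intro x
    by_cases hx : x ∈ Ω
    · exact mul_nonneg (mul_self_nonneg _) (inv_nonneg.2 (hφpos x hx).le)
    · have : u x = 0 := hu0 x (fun hxx => hx (hKΩ hxx))
      simp [hχdef, this]
  -- the pointwise identity on Ω
  have hid : ∀ x ∈ Ω,
      ((A x).mulVec (grad φ x)) ⬝ᵥ (grad χ x) + V x * φ x * χ x = f x - h x := by
    intro x hx
    have ht : φ x ≠ 0 := (hφpos x hx).ne'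
    have hkey := alg_key (A x) (hAs x hx) (grad u x) (grad φ x) (u x * (φ x)⁻¹)
    have hVeq : V x * φ x * χ x = V x * (u x)^2 := by
      simp only [hχdef]
      field_simp
    rw [hgradχ x hx, hVeq]
    simp only [hfdef, hhdef, hξdef]
    linarith [hkey]
  -- nonnegativity of h on Ω
  have hhnn : ∀ x ∈ Ω, 0 ≤ h x := by
    intro x hx
    by_cases hxK : x ∈ K
    · have := (hμ x hxK (ξ x)).1
      have h0 : 0 ≤ μ⁻¹ * ∑ i, ξ x i ^ 2 := by
        apply mul_nonneg (inv_nonneg.2 hμ0.le)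
        exact Finset.sum_nonneg fun i _ => sq_nonneg _
      linarith
    · simp [hhdef, hξ0 x hxK]
  -- main case split on integrability
  by_cases hfi : IntegrableOn f Ω
  · -- measurability of h
    have hφae : AEMeasurable φ (volume.restrict Ω) :=
      (hφc.continuousOn).aemeasurable hΩo.measurableSet
    have hgradφc : ContinuousOn (fun x => grad φ x) Ω := by
      rw [continuousOn_pi]
      intro i
      exact (hφc.continuousOn_fderiv_of_isOpen hΩo le_rfl).clm_apply continuousOn_const
    have hξae : ∀ i, AEMeasurable (fun x => ξ x i) (volume.restrict Ω) := by
      intro i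
      have h1 : AEMeasurable (fun x => grad φ x i) (volume.restrict Ω) :=
        ((continuousOn_pi.1 hgradφc) i).aemeasurable hΩo.measurableSet
      have h2 : AEMeasurable (fun x => grad u x i) (volume.restrict Ω) :=
        ((continuous_pi_iff.1 hgraduC) i).aemeasurable.restrict
      exact h2.sub ((huC.aemeasurable.restrict.mul hφae.inv).mul h1)
    have hhae : AEMeasurable h (volume.restrict Ω) := by
      have : h = fun x => ∑ i, (∑ j, A x i j * ξ x j) * ξ x i := by
        funext x
        simp [hhdef, Matrix.mulVec, dotProduct]
      rw [this]
      apply Finset.aemeasurable_fun_sum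
      intro i _
      refine AEMeasurable.mul ?_ (hξae i)
      apply Finset.aemeasurable_fun_sum
      intro j _
      exact ((hAm i j).aemeasurable.restrict).mul (hξae j)
    -- bound for h
    have hξcont : ContinuousOn (fun x => ∑ i, ξ x i ^ 2) Ω := by
      refine continuousOn_finset_sum _ (fun i _ => ?_)
      have := (continuousOn_pi.1 hgradφc) i
      have hφinv : ContinuousOn (fun x => (φ x)⁻¹) Ω :=
        (hφc.continuousOn).inv₀ (fun x hx => (hφpos x hx).ne')
      have hc1 : ContinuousOn (fun x => u x * (φ x)⁻¹) Ω :=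
        (huC.continuousOn).mul hφinv
      have hξi : ContinuousOn (fun x => ξ x i) Ω := by
        apply ContinuousOn.sub
        · exact ((continuous_pi_iff.1 hgraduC) i).continuousOn
        · exact hc1.mul this
      exact hξi.pow 2
    obtain ⟨C, hC⟩ := hKc.exists_bound_of_continuousOn (hξcont.mono hKΩ)
    have hhi : IntegrableOn h Ω := by
      apply Integrable.mono' (g := K.indicator (fun _ => μ * C))
      · rw [integrable_indicator_iff hKc.measurableSet]
        exact integrableOn_const hKc.measure_lt_top.ne
      · exact hhae.aestronglyMeasurable
      · rw [ae_restrict_iff' hΩo.measurableSet]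
        apply ae_of_all
        intro x hx
        by_cases hxK : x ∈ K
        · have hb := (hμ x hxK (ξ x)).2
          have hCb := hC x hxK
          rw [Real.norm_eq_abs] at hCb ⊢
          rw [abs_of_nonneg (hhnn x hx)]
          have h1 : ∑ i, ξ x i ^ 2 ≤ C := le_trans (le_abs_self _) hCb
          have : h x ≤ μ * C := le_trans hb (by nlinarith)
          simpa [Set.indicator_of_mem hxK] using this
        · simp [Set.indicator_of_notMem hxK, hhdef, hξ0 x hxK]
    have hgi : IntegrableOn (fun x => f x - h x) Ω := hfi.sub hhi
    have hsplit : aForm Ω A V u = (∫ x in Ω, (f x - h x)) + ∫ x in Ω, h x := by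
      rw [← integral_add hgi hhi]
      apply setIntegral_congr_fun hΩo.measurableSet
      intro x _
      simp [hfdef]
    have hpair : pairing Ω A V φ χ = ∫ x in Ω, (f x - h x) := by
      apply setIntegral_congr_fun hΩo.measurableSet
      intro x hx
      exact hid x hx
    have h1 : 0 ≤ ∫ x in Ω, (f x - h x) := hpair ▸ hφsup χ hχtest hχnn
    have h2 : 0 ≤ ∫ x in Ω, h x := setIntegral_nonneg hΩo.measurableSet hhnn
    rw [hsplit]
    linarith
  · have : aForm Ω A V u = 0 := integral_undef hfi
    rw [this]
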